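/- arXiv:2405.01947 — 3 statements merged into one kernel-verified Lean document; each statement's English description precedes it below -/
import Mathlib

section
/- Define Π_N : ℝ → ℝ by Π_N(s) = s·ln s for s ≥ 1/N, and Π_N(s) = Σ_{j=0}^{4} (1/j!)·Π^{(j)}(1/N)·(s − 1/N)^j for s ≤ 1/N, where Π(s) = s·ln s. Then there exists a constant d₁ ≥ 0, independent of N, such that Π_N(s) ≥ −d₁ for all s ∈ ℝ and all N ≥ 1. -/
/-!
Below `1/N` the Taylor polynomial of `s ln s` at `1/N`, written in the variable `y = N s - 1`, is
`Π_N(s) = -s ln N + p(N s - 1) / N` with `p(y) = y + y²/2 - y³/6 + y⁴/12`. The quartic `p` is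
bounded below by `-1/2` on all of `ℝ`, and `s ln N ≤ 1` for `s < 1/N` because `ln N ≤ N`; above
`1/N` one uses `s ln s ≥ s - 1 ≥ -1`. Hence `Π_N ≥ -3/2` for every `N ≥ 1`.
-/

/-- The fourth-order Taylor regularization of Π(s) = s·ln s at 1/N:
`PiN N s = s ln s` for `s ≥ 1/N`, and for `s ≤ 1/N` the degree-4 Taylor
polynomial of `s ln s` at `1/N` (using Π'(a) = 1 + ln a, Π''(a) = 1/a,
Π'''(a) = −1/a², Π⁽⁴⁾(a) = 2/a³). -/
noncomputable def PiN (N : ℕ) (s : ℝ) : ℝ :=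
  if (1 : ℝ) / (N : ℝ) ≤ s then s * Real.log s
  else (1 / (N : ℝ)) * Real.log (1 / (N : ℝ))
    + (1 + Real.log (1 / (N : ℝ))) * (s - 1 / (N : ℝ))
    + ((N : ℝ) / 2) * (s - 1 / (N : ℝ))^2
    - ((N : ℝ)^2 / 6) * (s - 1 / (N : ℝ))^3
    + ((N : ℝ)^3 / 12) * (s - 1 / (N : ℝ))^4

open Real

noncomputable def piNQuartic (y : ℝ) : ℝ :=
  y + y ^ 2 / 2 - y ^ 3 / 6 + y ^ 4 / 12

lemma neg_half_le_piNQuartic (y : ℝ) : -(1 / 2) ≤ piNQuartic y := by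
  unfold piNQuartic
  nlinarith [sq_nonneg (y + 1), sq_nonneg (y ^ 2), sq_nonneg y, sq_nonneg (y ^ 2 - 1)]

lemma PiN_of_le {N : ℕ} {s : ℝ} (hs : 1 / (N : ℝ) ≤ s) : PiN N s = s * log s :=
  if_pos hs

lemma PiN_of_lt {N : ℕ} (hN : N ≠ 0) {s : ℝ} (hs : s < 1 / (N : ℝ)) :
    PiN N s = -(s * log N) + piNQuartic (N * s - 1) / N := by
  have hN' : (N : ℝ) ≠ 0 := Nat.cast_ne_zero.mpr hN
  rw [PiN, if_neg hs.not_ge, one_div, log_inv, piNQuartic]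
  field_simp
  ring

lemma mul_log_natCast_le_one {N : ℕ} {s : ℝ} (hs : s < 1 / (N : ℝ)) : s * log N ≤ 1 := by
  rcases le_or_gt s 0 with hs0 | hs0
  · nlinarith [log_natCast_nonneg N]
  · have hN : (0 : ℝ) < N := one_div_pos.mp (hs0.trans hs)
    calc s * log N ≤ s * N := by gcongr; exact log_le_self N.cast_nonneg
      _ ≤ 1 := by rw [lt_div_iff₀ hN] at hs; linarith

lemma neg_three_halves_le_PiN {N : ℕ} (hN : 1 ≤ N) (s : ℝ) : -(3 / 2) ≤ PiN N s := by
  by_cases hs : 1 / (N : ℝ) ≤ s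
  · have hs0 : 0 ≤ s := le_trans (by positivity) hs
    rw [PiN_of_le hs]
    linarith [self_sub_one_le_mul_log hs0]
  · push Not at hs
    rw [PiN_of_lt (by omega) hs]
    have hquartic : -(1 / 2) ≤ piNQuartic (N * s - 1) / N := by
      have hN' : (1 : ℝ) ≤ N := by exact_mod_cast hN
      rw [le_div_iff₀ (by positivity)]
      nlinarith [neg_half_le_piNQuartic (N * s - 1)]
    linarith [mul_log_natCast_le_one hs]

/-- There exists d₁ ≥ 0, independent of N, with Π_N(s) ≥ −d₁ for all s and N ≥ 1. -/
theorem stmt_2 :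
    ∃ d₁ : ℝ, 0 ≤ d₁ ∧ ∀ N : ℕ, 1 ≤ N → ∀ s : ℝ, PiN N s ≥ -d₁ :=
  ⟨3 / 2, by norm_num, fun _ hN s => neg_three_halves_le_PiN hN s⟩
end

section
/- With Π_N the fourth-order Taylor regularization of s·ln s at 1/N and F₀^N(r,s) := θ·[Π_N(½(1+r−s)) + Π_N(½(1−r−s)) + Π_N(s)] for θ > 0, there exist constants d₄ > 0 and d₅ ≥ 0, independent of N, such that F₀^N(r,s) ≥ d₄·(|r|⁴ + |s|⁴) − d₅ for all r, s ∈ ℝ. -/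
/-!
On `[1/N, ∞)` the function `Π_N(x) = x ln x` is bounded below by `-1`, and on `(-∞, 1/N)` every
coefficient of the Taylor polynomial in `t = x - 1/N` dominates the corresponding coefficient of
`-1 + t + t²/2 + t⁴/12` (the cubic term has the good sign since `t < 0`), so uniformly in `N`
we get `Π_N(x) ≥ (x⁻)⁴/12 - 2`. The three arguments `a = (1+r-s)/2`, `b = (1-r-s)/2`, `c = s`
sum to `1`, so each of them is bounded in absolute value by `1 + a⁻ + b⁻ + c⁻`; as `r = a - b`
and `s = c`, the negative parts therefore control `|r|⁴ + |s|⁴`.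
-/

open Real

lemma PiN_ge_negPart_pow_four {N : ℕ} (hN : 1 ≤ N) (x : ℝ) : x⁻ ^ 4 / 12 - 2 ≤ PiN N x := by
  have hn : (1 : ℝ) ≤ N := by exact_mod_cast hN
  unfold PiN
  split_ifs with h
  · have hx : 0 < x := lt_of_lt_of_le (by positivity) h
    rw [negPart_eq_zero.mpr hx.le]
    linarith [self_sub_one_le_mul_log hx.le]
  · set n : ℝ := (N : ℝ)
    set t := x - 1 / n
    have ht0 : t < 0 := by linarith
    have hlog : 0 ≤ log n := log_nonneg hn
    have hconst : -1 ≤ 1 / n * log (1 / n) := by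
      rw [one_div, log_inv, mul_neg, neg_le_neg_iff, inv_mul_le_one₀ (by positivity)]
      exact log_le_self (by positivity)
    have hlin : t ≤ (1 + log (1 / n)) * t := by
      rw [one_div, log_inv]; nlinarith
    have hsq : t ^ 2 / 2 ≤ n / 2 * t ^ 2 := by nlinarith [sq_nonneg t]
    have hcub : 0 ≤ -(n ^ 2 / 6 * t ^ 3) := by
      have : t ^ 3 ≤ 0 := Odd.pow_nonpos (by decide) ht0.le
      nlinarith [sq_nonneg n]
    have hquart : t ^ 4 / 12 ≤ n ^ 3 / 12 * t ^ 4 := by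
      have : 1 ≤ n ^ 3 := one_le_pow₀ hn
      nlinarith [pow_nonneg (sq_nonneg t) 2]
    have hneg : x⁻ ^ 4 ≤ t ^ 4 := by
      have : x⁻ ≤ -t := max_le (by linarith [one_div_pos.mpr (by positivity : (0 : ℝ) < n)])
        (by linarith)
      calc x⁻ ^ 4 ≤ (-t) ^ 4 := pow_le_pow_left₀ (negPart_nonneg x) this 4
        _ = t ^ 4 := by ring
    nlinarith [sq_nonneg (t + 1)]

lemma add_add_add_pow_four_le {a b c d : ℝ} (ha : 0 ≤ a) (hb : 0 ≤ b) (hc : 0 ≤ c)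
    (hd : 0 ≤ d) : (a + b + c + d) ^ 4 ≤ 64 * (a ^ 4 + b ^ 4 + c ^ 4 + d ^ 4) := by
  have := pow_sum_le_card_mul_sum_pow (s := Finset.univ) (f := ![a, b, c, d])
    (fun i _ ↦ by fin_cases i <;> assumption) 3
  norm_num [Fin.sum_univ_four, add_assoc] at this ⊢
  exact this

lemma abs_le_one_add_negPart_of_add_add_eq_one {x y z : ℝ} (h : x + y + z = 1) :
    |x| ≤ 1 + (x⁻ + y⁻ + z⁻) := by
  have := neg_le_negPart x
  have := neg_le_negPart y
  have := neg_le_negPart z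
  have := negPart_nonneg x
  have := negPart_nonneg y
  have := negPart_nonneg z
  exact abs_le.mpr ⟨by linarith, by linarith⟩

lemma abs_sub_pow_four_add_le_of_add_add_eq_one {a b c : ℝ} (h : a + b + c = 1) :
    |a - b| ^ 4 + |c| ^ 4 ≤ 1088 * (1 + a⁻ ^ 4 + b⁻ ^ 4 + c⁻ ^ 4) := by
  set M := 1 + (a⁻ + b⁻ + c⁻)
  have ha : |a| ≤ M := abs_le_one_add_negPart_of_add_add_eq_one h
  have hb : |b| ≤ M := by
    have := abs_le_one_add_negPart_of_add_add_eq_one (x := b) (y := a) (z := c) (by linarith)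
    linarith
  have hc : |c| ≤ M := by
    have := abs_le_one_add_negPart_of_add_add_eq_one (x := c) (y := a) (z := b) (by linarith)
    linarith
  have hab : |a - b| ≤ 2 * M := by linarith [abs_sub a b]
  have hM : M ^ 4 ≤ 64 * (1 + a⁻ ^ 4 + b⁻ ^ 4 + c⁻ ^ 4) := by
    simpa [M, ← add_assoc] using add_add_add_pow_four_le zero_le_one
      (negPart_nonneg a) (negPart_nonneg b) (negPart_nonneg c)
  calc |a - b| ^ 4 + |c| ^ 4 ≤ (2 * M) ^ 4 + M ^ 4 := by gcongr
    _ = 17 * M ^ 4 := by ring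
    _ ≤ 1088 * (1 + a⁻ ^ 4 + b⁻ ^ 4 + c⁻ ^ 4) := by linarith

/-- For F₀^N(r,s) = θ[Π_N(½(1+r−s)) + Π_N(½(1−r−s)) + Π_N(s)] with θ > 0, there
are d₄ > 0, d₅ ≥ 0 independent of N with F₀^N(r,s) ≥ d₄(|r|⁴ + |s|⁴) − d₅. -/
theorem stmt_7 :
    ∀ θ : ℝ, 0 < θ →
      ∃ d₄ : ℝ, 0 < d₄ ∧ ∃ d₅ : ℝ, 0 ≤ d₅ ∧
        ∀ N : ℕ, 1 ≤ N → ∀ r s : ℝ,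
          θ * (PiN N ((1 + r - s) / 2) + PiN N ((1 - r - s) / 2) + PiN N s) ≥
            d₄ * (|r|^4 + |s|^4) - d₅ := by
  intro θ hθ
  refine ⟨θ / 13056, by positivity, 7 * θ, by positivity, fun N hN r s ↦ ?_⟩
  set a := (1 + r - s) / 2
  set b := (1 - r - s) / 2
  have hr : r = a - b := by ring
  have hsum : a + b + s = 1 := by ring
  have hcoercive := abs_sub_pow_four_add_le_of_add_add_eq_one hsum
  rw [← hr] at hcoercive
  have hPi : (1 + a⁻ ^ 4 + b⁻ ^ 4 + s⁻ ^ 4) / 12 - 7 ≤ PiN N a + PiN N b + PiN N s := by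
    linarith [PiN_ge_negPart_pow_four hN a, PiN_ge_negPart_pow_four hN b,
      PiN_ge_negPart_pow_four hN s]
  rw [ge_iff_le]
  calc θ / 13056 * (|r| ^ 4 + |s| ^ 4) - 7 * θ
      ≤ θ * ((1 + a⁻ ^ 4 + b⁻ ^ 4 + s⁻ ^ 4) / 12 - 7) := by nlinarith
    _ ≤ θ * (PiN N a + PiN N b + PiN N s) := by gcongr
end

section
/- Let α ≥ 0, γ ≥ 0, g, δ ∈ ℝ, and set C_F = max(0, (3/2)|δ| − α, |δ| + |g| − γ). Define F₁⁻(φ,ψ) = −(α/2)φ² − (g/3)(ψ−½)³ − (γ/2)(ψ−½)² + (δ/2)φ²(ψ−½) − (C_F/2)(φ² + ψ²). Then for every (φ,ψ) in the triangle 𝒦 with vertices (−1,0), (1,0), (0,1), the Hessian H of F₁⁻ at (φ,ψ) satisfies tr H ≤ 0 and det H ≥ 0; hence F₁⁻ is concave on 𝒦. -/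
/-!
On the triangle one has |ψ − ½| ≤ ½, and C_F is chosen exactly so that the Hessian entries satisfy
H₁₁, H₂₂ ≤ −|δ| and |H₁₂| ≤ |δ|; this gives the signs of trace and determinant and makes the Hessian
form nonpositive. Since F₁⁻ is a cubic polynomial, its restriction to a segment is a cubic in the
parameter whose second derivative is the Hessian form along the segment, so it is concave, and
concavity along every segment of a convex set is concavity.
-/

open Set

theorem abs_mul_sub_half_le {x ψ : ℝ} (hψ : ψ ∈ Icc (0 : ℝ) 1) :
    |x * (ψ - 1 / 2)| ≤ |x| / 2 := by
  have : |ψ - 1 / 2| ≤ 1 / 2 := abs_le.2 ⟨by linarith [hψ.1], by linarith [hψ.2]⟩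
  rw [abs_mul]
  nlinarith [abs_nonneg x]

theorem quadForm_nonpos_of_le_neg {a b c e : ℝ} (ha : a ≤ -e) (hc : c ≤ -e) (hb : |b| ≤ e)
    (x y : ℝ) : a * x ^ 2 + 2 * b * (x * y) + c * y ^ 2 ≤ 0 := by
  have hb' := abs_le.1 hb
  nlinarith [sq_nonneg x, sq_nonneg y, mul_nonneg (by linarith : 0 ≤ e + b) (sq_nonneg (x - y)),
    mul_nonneg (by linarith : 0 ≤ e - b) (sq_nonneg (x + y))]

theorem mul_sub_sq_nonneg_of_le_neg {a b c e : ℝ} (ha : a ≤ -e) (hc : c ≤ -e) (hb : |b| ≤ e) :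
    0 ≤ a * c - b ^ 2 := by
  have he : 0 ≤ e := (abs_nonneg b).trans hb
  nlinarith [mul_le_mul hb hb (abs_nonneg b) he, sq_abs b]

theorem concaveOn_of_forall_segment {E : Type*} [AddCommGroup E] [Module ℝ E]
    {s : Set E} {f : E → ℝ} (hs : Convex ℝ s)
    (h : ∀ x ∈ s, ∀ y ∈ s, ConcaveOn ℝ (Icc 0 1) fun t : ℝ => f (x + t • (y - x))) :
    ConcaveOn ℝ s f := by
  refine ⟨hs, fun x hx y hy a b ha hb hab => ?_⟩
  have hseg := (h x hx y hy).2 (left_mem_Icc.2 zero_le_one) (right_mem_Icc.2 zero_le_one)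
    ha hb hab
  obtain rfl : a = 1 - b := by linarith
  have hpt : (1 - b) • x + b • y = x + ((1 - b) • (0 : ℝ) + b • (1 : ℝ)) • (y - x) := by
    module
  simpa [hpt] using hseg

theorem concaveOn_cubic {a b c₀ c₁ c₂ c₃ : ℝ}
    (h : ∀ u ∈ Icc a b, 2 * c₂ + 6 * c₃ * u ≤ 0) :
    ConcaveOn ℝ (Icc a b) fun t => c₀ + c₁ * t + c₂ * t ^ 2 + c₃ * t ^ 3 := by
  refine ⟨convex_Icc a b, fun s hs t ht μ ν hμ hν hμν => ?_⟩
  obtain rfl : μ = 1 - ν := by linarith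
  set m := (1 - ν) * s + ν * t
  have hmid : (s + t + m) / 3 ∈ Icc a b := by
    obtain ⟨hs₀, hs₁⟩ := hs; obtain ⟨ht₀, ht₁⟩ := ht
    constructor <;> nlinarith
  -- the chord defect of a cubic is a nonnegative multiple of `-p''` at the mean of `s`, `t`, `m`
  have hgap : c₀ + c₁ * m + c₂ * m ^ 2 + c₃ * m ^ 3
      - ((1 - ν) * (c₀ + c₁ * s + c₂ * s ^ 2 + c₃ * s ^ 3)
        + ν * (c₀ + c₁ * t + c₂ * t ^ 2 + c₃ * t ^ 3))
      = (1 - ν) * ν * (s - t) ^ 2 * (-(2 * c₂ + 6 * c₃ * ((s + t + m) / 3)) / 2) := by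
    simp only [m]; ring
  have : 0 ≤ (1 - ν) * ν * (s - t) ^ 2 * (-(2 * c₂ + 6 * c₃ * ((s + t + m) / 3)) / 2) :=
    mul_nonneg (mul_nonneg (mul_nonneg (by linarith) hν) (sq_nonneg _))
      (by linarith [h _ hmid])
  simp only [smul_eq_mul]
  linarith

def triangle : Set (ℝ × ℝ) :=
  {p | |p.1| ≤ 1 ∧ 0 ≤ p.2 ∧ p.1 + p.2 ≤ 1 ∧ p.2 - p.1 ≤ 1}

theorem convex_triangle : Convex ℝ triangle := by
  rintro ⟨x₁, x₂⟩ ⟨hx₁, hx₂, hx₃, hx₄⟩ ⟨y₁, y₂⟩ ⟨hy₁, hy₂, hy₃, hy₄⟩ a b ha hb hab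
  obtain ⟨hx₁', hx₁''⟩ := abs_le.1 hx₁
  obtain ⟨hy₁', hy₁''⟩ := abs_le.1 hy₁
  simp only [triangle, mem_ofPred_eq, Prod.smul_mk, Prod.mk_add_mk, smul_eq_mul]
  refine ⟨abs_le.2 ⟨?_, ?_⟩, ?_, ?_, ?_⟩ <;> nlinarith

theorem snd_mem_Icc_of_mem_triangle {p : ℝ × ℝ} (hp : p ∈ triangle) : p.2 ∈ Icc (0 : ℝ) 1 :=
  ⟨hp.2.1, by linarith [(abs_le.1 hp.1).1, hp.2.2.1, hp.2.2.2]⟩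

section FreeEnergy

variable (α γ g δ C : ℝ)

noncomputable def freeEnergy (p : ℝ × ℝ) : ℝ :=
  -(α / 2) * p.1 ^ 2 - (g / 3) * (p.2 - 1 / 2) ^ 3 - (γ / 2) * (p.2 - 1 / 2) ^ 2
    + (δ / 2) * p.1 ^ 2 * (p.2 - 1 / 2) - (C / 2) * (p.1 ^ 2 + p.2 ^ 2)

noncomputable def hessianForm (p v : ℝ × ℝ) : ℝ :=
  (-α - C + δ * (p.2 - 1 / 2)) * v.1 ^ 2 + 2 * (δ * p.1) * (v.1 * v.2)
    + (-γ - 2 * g * (p.2 - 1 / 2) - C) * v.2 ^ 2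

noncomputable def cubicForm (v : ℝ × ℝ) : ℝ :=
  δ / 2 * v.1 ^ 2 * v.2 - g / 3 * v.2 ^ 3

theorem freeEnergy_add_smul (p v : ℝ × ℝ) (t : ℝ) :
    freeEnergy α γ g δ C (p + t • v) = freeEnergy α γ g δ C p
      + ((-α - C + δ * (p.2 - 1 / 2)) * p.1 * v.1
        + (-g * (p.2 - 1 / 2) ^ 2 - γ * (p.2 - 1 / 2) + δ / 2 * p.1 ^ 2 - C * p.2) * v.2) * t
      + hessianForm α γ g δ C p v / 2 * t ^ 2 + cubicForm g δ v * t ^ 3 := by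
  simp only [freeEnergy, hessianForm, cubicForm, Prod.fst_add, Prod.snd_add, Prod.smul_fst,
    Prod.smul_snd, smul_eq_mul]
  ring

theorem hessianForm_add_smul (p v : ℝ × ℝ) (u : ℝ) :
    hessianForm α γ g δ C (p + u • v) v = hessianForm α γ g δ C p v + 6 * cubicForm g δ v * u := by
  simp only [hessianForm, cubicForm, Prod.fst_add, Prod.snd_add, Prod.smul_fst, Prod.smul_snd,
    smul_eq_mul]
  ring

variable {α γ g δ C}

theorem hessian₁₁_le_neg_abs (hC : (3 / 2) * |δ| - α ≤ C) {ψ : ℝ} (hψ : ψ ∈ Icc (0 : ℝ) 1) :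
    -α - C + δ * (ψ - 1 / 2) ≤ -|δ| := by
  linarith [le_abs_self (δ * (ψ - 1 / 2)), abs_mul_sub_half_le (x := δ) hψ]

theorem hessian₂₂_le_neg_abs (hC : |δ| + |g| - γ ≤ C) {ψ : ℝ} (hψ : ψ ∈ Icc (0 : ℝ) 1) :
    -γ - 2 * g * (ψ - 1 / 2) - C ≤ -|δ| := by
  have := abs_mul_sub_half_le (x := 2 * g) hψ
  rw [abs_mul 2 g, abs_two] at this
  linarith [neg_abs_le (2 * g * (ψ - 1 / 2))]

theorem abs_hessian₁₂_le {φ : ℝ} (hφ : |φ| ≤ 1) : |δ * φ| ≤ |δ| := by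
  rw [abs_mul]
  exact mul_le_of_le_one_right (abs_nonneg δ) hφ

theorem hessianForm_nonpos (hC₁ : (3 / 2) * |δ| - α ≤ C) (hC₂ : |δ| + |g| - γ ≤ C)
    {p : ℝ × ℝ} (hp : p ∈ triangle) (v : ℝ × ℝ) : hessianForm α γ g δ C p v ≤ 0 :=
  quadForm_nonpos_of_le_neg (hessian₁₁_le_neg_abs hC₁ (snd_mem_Icc_of_mem_triangle hp))
    (hessian₂₂_le_neg_abs hC₂ (snd_mem_Icc_of_mem_triangle hp)) (abs_hessian₁₂_le hp.1) _ _

theorem concaveOn_freeEnergy (hC₁ : (3 / 2) * |δ| - α ≤ C) (hC₂ : |δ| + |g| - γ ≤ C) :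
    ConcaveOn ℝ triangle (freeEnergy α γ g δ C) := by
  refine concaveOn_of_forall_segment convex_triangle fun p hp q hq => ?_
  simp_rw [freeEnergy_add_smul]
  refine concaveOn_cubic fun u hu => ?_
  have := hessianForm_nonpos hC₁ hC₂ (convex_triangle.add_smul_sub_mem hp hq hu) (q - p)
  rw [hessianForm_add_smul] at this
  linarith

end FreeEnergy

theorem stmt_14_general (α γ g δ CF : ℝ)
    (hCF : CF = max 0 (max ((3 / 2) * |δ| - α) (|δ| + |g| - γ))) :
    (∀ φ ψ : ℝ, |φ| ≤ 1 → 0 ≤ ψ → φ + ψ ≤ 1 → ψ - φ ≤ 1 →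
      ((-α - CF + δ * (ψ - 1 / 2)) + (-γ - 2 * g * (ψ - 1 / 2) - CF) ≤ 0 ∧
        (-α - CF + δ * (ψ - 1 / 2)) * (-γ - 2 * g * (ψ - 1 / 2) - CF)
          - (δ * φ)^2 ≥ 0)) ∧
    ConcaveOn ℝ
      {p : ℝ × ℝ | |p.1| ≤ 1 ∧ 0 ≤ p.2 ∧ p.1 + p.2 ≤ 1 ∧ p.2 - p.1 ≤ 1}
      (fun p => -(α / 2) * p.1^2 - (g / 3) * (p.2 - 1 / 2)^3
        - (γ / 2) * (p.2 - 1 / 2)^2 + (δ / 2) * p.1^2 * (p.2 - 1 / 2)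
        - (CF / 2) * (p.1^2 + p.2^2)) := by
  have hC₁ : (3 / 2) * |δ| - α ≤ CF := hCF ▸ le_max_of_le_right (le_max_left _ _)
  have hC₂ : |δ| + |g| - γ ≤ CF := hCF ▸ le_max_of_le_right (le_max_right _ _)
  refine ⟨fun φ ψ hφ hψ₀ hs hd => ?_, concaveOn_freeEnergy hC₁ hC₂⟩
  have hψ : ψ ∈ Icc (0 : ℝ) 1 := snd_mem_Icc_of_mem_triangle (p := (φ, ψ)) ⟨hφ, hψ₀, hs, hd⟩
  have h₁₁ := hessian₁₁_le_neg_abs hC₁ hψ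
  have h₂₂ := hessian₂₂_le_neg_abs hC₂ hψ
  have h₁₂ := abs_hessian₁₂_le (δ := δ) hφ
  exact ⟨by linarith [abs_nonneg δ], mul_sub_sq_nonneg_of_le_neg h₁₁ h₂₂ h₁₂⟩

/-- With C_F = max(0, (3/2)|δ| − α, |δ| + |g| − γ), the Hessian of
F₁⁻(φ,ψ) = −(α/2)φ² − (g/3)(ψ−½)³ − (γ/2)(ψ−½)² + (δ/2)φ²(ψ−½) − (C_F/2)(φ²+ψ²)
has nonpositive trace and nonnegative determinant on the triangle 𝒦, and F₁⁻ is
concave on 𝒦. -/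
theorem stmt_14 (α γ g δ CF : ℝ) (hα : 0 ≤ α) (hγ : 0 ≤ γ)
    (hCF : CF = max 0 (max ((3 / 2) * |δ| - α) (|δ| + |g| - γ))) :
    (∀ φ ψ : ℝ, |φ| ≤ 1 → 0 ≤ ψ → φ + ψ ≤ 1 → ψ - φ ≤ 1 →
      ((-α - CF + δ * (ψ - 1 / 2)) + (-γ - 2 * g * (ψ - 1 / 2) - CF) ≤ 0 ∧
        (-α - CF + δ * (ψ - 1 / 2)) * (-γ - 2 * g * (ψ - 1 / 2) - CF)
          - (δ * φ)^2 ≥ 0)) ∧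
    ConcaveOn ℝ
      {p : ℝ × ℝ | |p.1| ≤ 1 ∧ 0 ≤ p.2 ∧ p.1 + p.2 ≤ 1 ∧ p.2 - p.1 ≤ 1}
      (fun p => -(α / 2) * p.1^2 - (g / 3) * (p.2 - 1 / 2)^3
        - (γ / 2) * (p.2 - 1 / 2)^2 + (δ / 2) * p.1^2 * (p.2 - 1 / 2)
        - (CF / 2) * (p.1^2 + p.2^2)) :=
  stmt_14_general α γ g δ CF hCF
end
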